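/- For the nrDFAwtl A_ex3 defined in the context, the Parikh image of L(A_ex3) with respect to the letter ordering (a,b,c) equals {(2n+1, 2n+1, 2n+1) : n ≥ 0}; that is, every word in L(A_ex3) contains the same odd number of occurrences of a, b, and c, and for every n ≥ 0 there is a word in L(A_ex3) with exactly 2n+1 occurrences of each letter. -/

import Mathlib

/-- The end-of-tape behaviour of a non-returning automaton with translucent
letters: either a set of states to continue with (the empty set meaning that
the transition is undefined), or the operation `Accept`. -/
inductive EndMove (Q : Type) where
  | cont : Set Q → EndMove Q
  | accept : EndMove Q

/-- A nondeterministic finite automaton with translucent letters (NFAwtl).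
`τ q` is the set of letters that are translucent for state `q`. -/
structure NFAwtl (Q : Type) (A : Type) where
  τ : Q → Set A
  I : Set Q
  F : Set Q
  δ : Q → A → Set Q
  tr_compat : ∀ q a, a ∈ τ q → δ q a = ∅

namespace NFAwtl

variable {Q A : Type}

/-- A single computation step of an NFAwtl: the first letter (from the left)
that is not translucent for the current state is read and deleted. -/
inductive Step (M : NFAwtl Q A) : Q × List A → Q × List A → Prop
  | read (q q' : Q) (u v : List A) (a : A) :
      (∀ b ∈ u, b ∈ M.τ q) → a ∉ M.τ q → q' ∈ M.δ q a →
      Step M (q, u ++ a :: v) (q', u ++ v)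

/-- The language accepted by an NFAwtl: words from which some computation
reaches a configuration whose remaining tape contents is translucent for a
final state. -/
def lang (M : NFAwtl Q A) : Set (List A) :=
  { w | ∃ q₀ ∈ M.I, ∃ q w', Relation.ReflTransGen (Step M) (q₀, w) (q, w') ∧
        (∀ b ∈ w', b ∈ M.τ q) ∧ q ∈ M.F }

/-- An NFAwtl is deterministic (a DFAwtl) if it has a single initial state and
at most one transition for each state/letter pair. -/
def IsDet (M : NFAwtl Q A) : Prop :=
  (∃ q, M.I = {q}) ∧ ∀ q a, (M.δ q a).Subsingleton

end NFAwtl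

/-- A configuration of a non-returning automaton with translucent letters:
`conf x q w` means the tape contains `x ++ w` followed by the end-of-tape
marker, the current state is `q`, and the head is positioned at the first
letter of `w`; `accept` is the accepting halting configuration. -/
inductive NrConf (Q : Type) (A : Type) where
  | conf : List A → Q → List A → NrConf Q A
  | accept : NrConf Q A

/-- A non-returning nondeterministic finite automaton with translucent
letters (nrNFAwtl). -/
structure NrNFAwtl (Q : Type) (A : Type) where
  τ : Q → Set A
  I : Set Q
  δ : Q → A → Set Q
  δend : Q → EndMove Q
  tr_compat : ∀ q a, a ∈ τ q → δ q a = ∅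

namespace NrNFAwtl

variable {Q A : Type}

/-- A single computation step of an nrNFAwtl. -/
inductive Step (M : NrNFAwtl Q A) : NrConf Q A → NrConf Q A → Prop
  | read (x : List A) (q q' : Q) (u v : List A) (a : A) :
      (∀ b ∈ u, b ∈ M.τ q) → a ∉ M.τ q → q' ∈ M.δ q a →
      Step M (.conf x q (u ++ a :: v)) (.conf (x ++ u) q' v)
  | restart (x w : List A) (q q' : Q) (S : Set Q) :
      (∀ b ∈ w, b ∈ M.τ q) → M.δend q = .cont S → q' ∈ S →
      Step M (.conf x q w) (.conf [] q' (x ++ w))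
  | accept (x w : List A) (q : Q) :
      (∀ b ∈ w, b ∈ M.τ q) → M.δend q = .accept →
      Step M (.conf x q w) .accept

/-- The language accepted by an nrNFAwtl. -/
def lang (M : NrNFAwtl Q A) : Set (List A) :=
  { w | ∃ q₀ ∈ M.I, Relation.ReflTransGen (Step M) (.conf [] q₀ w) .accept }

/-- An nrNFAwtl is deterministic (an nrDFAwtl) if it has a single initial
state and, for every state and every letter (including the end-of-tape
marker), at most one transition is available. -/
def IsDet (M : NrNFAwtl Q A) : Prop :=
  (∃ q, M.I = {q}) ∧ (∀ q a, (M.δ q a).Subsingleton) ∧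
  (∀ q S, M.δend q = .cont S → S.Subsingleton)

end NrNFAwtl

/-- `L` is accepted by some NFAwtl. -/
def AcceptedByNFAwtl {A : Type} [Fintype A] (L : Set (List A)) : Prop :=
  ∃ (Q : Type) (_ : Fintype Q) (M : NFAwtl Q A), M.lang = L

/-- `L` is accepted by some DFAwtl. -/
def AcceptedByDFAwtl {A : Type} [Fintype A] (L : Set (List A)) : Prop :=
  ∃ (Q : Type) (_ : Fintype Q) (M : NFAwtl Q A), M.IsDet ∧ M.lang = L

/-- `L` is accepted by some nrNFAwtl. -/
def AcceptedByNrNFAwtl {A : Type} [Fintype A] (L : Set (List A)) : Prop :=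
  ∃ (Q : Type) (_ : Fintype Q) (M : NrNFAwtl Q A), M.lang = L

/-- `L` is accepted by some nrDFAwtl. -/
def AcceptedByNrDFAwtl {A : Type} [Fintype A] (L : Set (List A)) : Prop :=
  ∃ (Q : Type) (_ : Fintype Q) (M : NrNFAwtl Q A), M.IsDet ∧ M.lang = L

/-- The three-letter alphabet `{a, b, c}`. -/
inductive Γ3 : Type
  | a | b | c
deriving DecidableEq

instance : Fintype Γ3 :=
  ⟨{Γ3.a, Γ3.b, Γ3.c}, fun x => by cases x <;> simp⟩

/-- The state set of the nrDFAwtl `A_ex3`. -/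
inductive StEx3 : Type
  | q0 | q1 | q2 | q3 | q4 | q5 | q6 | q7 | q8
deriving DecidableEq

instance : Fintype StEx3 :=
  ⟨{StEx3.q0, StEx3.q1, StEx3.q2, StEx3.q3, StEx3.q4, StEx3.q5, StEx3.q6, StEx3.q7,
    StEx3.q8}, fun x => by cases x <;> simp⟩

/-- The translucency mapping of `A_ex3`. -/
def τEx3 : StEx3 → Set Γ3
  | .q0 => {Γ3.a}
  | .q1 => ∅
  | .q2 => ∅
  | .q3 => {Γ3.b}
  | .q4 => ∅
  | .q5 => ∅
  | .q6 => {Γ3.a, Γ3.c}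
  | .q7 => ∅
  | .q8 => ∅

/-- The letter transitions of `A_ex3`. -/
def δEx3 : StEx3 → Γ3 → Set StEx3
  | .q0, .b => {StEx3.q1}
  | .q1, .c => {StEx3.q2}
  | .q2, .a => {StEx3.q3}
  | .q3, .c => {StEx3.q4}
  | .q4, .a => {StEx3.q5}
  | .q5, .b => {StEx3.q6}
  | .q6, .b => {StEx3.q1}
  | .q7, .a => {StEx3.q8}
  | _, _ => ∅

/-- The end-of-tape transitions of `A_ex3`. -/
def δendEx3 : StEx3 → EndMove StEx3
  | .q2 => .cont {StEx3.q7}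
  | .q6 => .cont {StEx3.q0}
  | .q8 => .accept
  | _ => .cont ∅

/-- The nrDFAwtl `A_ex3` from Example 7 of the paper. -/
def Aex3 : NrNFAwtl StEx3 Γ3 where
  τ := τEx3
  I := {StEx3.q0}
  δ := δEx3
  δend := δendEx3
  tr_compat := by
    intro q x h
    cases q <;> cases x <;> simp_all [τEx3, δEx3]

/-!
Soundness: every pass `q₀ → q₆` or `q₆ → q₆` reads `bcacab`, deleting two copies of each
letter, and the only way to leave the loop is the end-of-tape restart from `q₂` into `q₇`,
which then accepts exactly the tape `a`. Read backwards, every configuration of an accepting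
run satisfies a state-dependent linear relation between the letter counts of its tape
(`Aex3.Inv`); in `q₀` it says that the three counts agree and are odd.
Completeness: `(bcacab)ⁿ abc` is accepted, one pass per block `bcacab`.
-/

namespace NrNFAwtl

variable {Q A : Type} {M : NrNFAwtl Q A}

theorem Step.read_cons {x v : List A} {q q' : Q} {a : A} (ha : a ∉ M.τ q)
    (hq' : q' ∈ M.δ q a) : M.Step (.conf x q (a :: v)) (.conf x q' v) := by
  simpa using Step.read x q q' [] v a (by simp) ha hq'

end NrNFAwtl

open Γ3 StEx3

namespace Aex3

def Inv : NrConf StEx3 Γ3 → Prop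
  | .accept => True
  | .conf x q w =>
    let A := (x ++ w).count a
    let B := (x ++ w).count b
    let C := (x ++ w).count c
    match q with
    | q0 => A = B ∧ B = C ∧ A % 2 = 1
    | q1 => A = B + 1 ∧ A = C ∧ A % 2 = 1
    | q2 => A = B + 1 ∧ A = C + 1 ∧ A % 2 = 1
    | q3 => A = B ∧ B = C ∧ A % 2 = 0
    | q4 => A = B ∧ A = C + 1 ∧ A % 2 = 0
    | q5 => B = A + 1 ∧ A = C ∧ A % 2 = 1
    | q6 => A = B ∧ B = C ∧ A % 2 = 1
    | q7 => w = [a]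
    | q8 => w = []

theorem inv_of_step {s s' : NrConf StEx3 Γ3} (h : Aex3.Step s s') (h' : Inv s') : Inv s := by
  cases h with
  | read x q q' u v l hu hl hq' =>
    cases q <;> cases l <;>
      simp only [Aex3, δEx3, Set.mem_singleton_iff, Set.mem_empty_iff_false] at hq' <;> subst hq'
    case q7.a =>
      obtain rfl : u = [] := List.eq_nil_iff_forall_not_mem.2 fun l => hu l
      obtain rfl : v = [] := h'
      rfl
    all_goals
      simp only [Inv, List.count_append, List.count_cons, beq_iff_eq, reduceCtorEq,
        ↓reduceIte] at h' ⊢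
      omega
  | restart x w q q' S hw hS hq' =>
    cases q <;> simp only [Aex3, δendEx3, EndMove.cont.injEq, reduceCtorEq] at hS <;> subst hS <;>
      simp only [Set.mem_singleton_iff, Set.mem_empty_iff_false] at hq' <;> subst hq'
    case q2 =>
      obtain h' : x ++ w = [a] := h'
      simp [Inv, h']
    case q6 => simpa [Inv] using h'
  | accept x w q hw hq =>
    cases q <;> simp only [Aex3, δendEx3, reduceCtorEq] at hq
    exact List.eq_nil_iff_forall_not_mem.2 fun l => hw l

theorem inv_of_reflTransGen_accept {s : NrConf StEx3 Γ3}
    (h : Relation.ReflTransGen Aex3.Step s .accept) : Inv s := by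
  induction h using Relation.ReflTransGen.head_induction_on with
  | refl => trivial
  | head hstep _ ih => exact inv_of_step hstep ih

theorem exists_count_eq_of_mem_lang {w : List Γ3} (hw : w ∈ Aex3.lang) :
    ∃ n, w.count a = 2 * n + 1 ∧ w.count b = 2 * n + 1 ∧ w.count c = 2 * n + 1 := by
  obtain ⟨q, hq, hacc⟩ := hw
  obtain rfl : q = q0 := hq
  obtain ⟨hab, hbc, hodd⟩ :
      w.count a = w.count b ∧ w.count b = w.count c ∧ w.count a % 2 = 1 := by
    simpa [Inv] using inv_of_reflTransGen_accept hacc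
  exact ⟨w.count a / 2, by omega, by omega, by omega⟩

theorem reflTransGen_cycle {q : StEx3} (hq : q = q0 ∨ q = q6) (w : List Γ3) :
    Relation.ReflTransGen Aex3.Step
      (.conf [] q (b :: c :: a :: c :: a :: b :: w)) (.conf [] q6 w) := by
  have hb : Aex3.Step
      (.conf [] q (b :: c :: a :: c :: a :: b :: w)) (.conf [] q1 (c :: a :: c :: a :: b :: w)) := by
    rcases hq with rfl | rfl <;> exact .read_cons (by simp [Aex3, τEx3]) (Set.mem_singleton _)
  exact .head hb <| .head (.read_cons (by simp [Aex3, τEx3]) (Set.mem_singleton _)) <|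
    .head (.read_cons (by simp [Aex3, τEx3]) (Set.mem_singleton _)) <|
    .head (.read_cons (by simp [Aex3, τEx3]) (Set.mem_singleton _)) <|
    .head (.read_cons (by simp [Aex3, τEx3]) (Set.mem_singleton _)) <|
    .single (.read_cons (by simp [Aex3, τEx3]) (Set.mem_singleton _))

theorem reflTransGen_abc {q : StEx3} (hq : q = q0 ∨ q = q6) :
    Relation.ReflTransGen Aex3.Step (.conf [] q [a, b, c]) .accept := by
  have hb : Aex3.Step (.conf [] q ([a] ++ b :: [c])) (.conf ([] ++ [a]) q1 [c]) := by
    rcases hq with rfl | rfl <;>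
      exact .read _ _ _ _ _ _ (by simp [Aex3, τEx3]) (by simp [Aex3, τEx3]) (Set.mem_singleton _)
  exact .head hb <| .head (.read_cons (by simp [Aex3, τEx3]) (Set.mem_singleton _)) <|
    .head (.restart _ _ _ _ _ (by simp) rfl (Set.mem_singleton _)) <|
    .head (.read_cons (by simp [Aex3, τEx3]) (Set.mem_singleton _)) <|
    .single (.accept _ _ _ (by simp) rfl)

def word : ℕ → List Γ3
  | 0 => [a, b, c]
  | n + 1 => b :: c :: a :: c :: a :: b :: word n

theorem count_word (n : ℕ) :
    (word n).count a = 2 * n + 1 ∧ (word n).count b = 2 * n + 1 ∧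
      (word n).count c = 2 * n + 1 := by
  induction n with
  | zero => decide
  | succ n ih =>
    simp only [word, List.count_cons, beq_iff_eq, reduceCtorEq, ↓reduceIte]
    omega

theorem reflTransGen_word {q : StEx3} (hq : q = q0 ∨ q = q6) (n : ℕ) :
    Relation.ReflTransGen Aex3.Step (.conf [] q (word n)) .accept := by
  induction n generalizing q with
  | zero => exact reflTransGen_abc hq
  | succ n ih => exact (reflTransGen_cycle hq _).trans (ih (.inr rfl))

theorem word_mem_lang (n : ℕ) : word n ∈ Aex3.lang :=
  ⟨q0, rfl, reflTransGen_word (.inl rfl) n⟩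

end Aex3

/-- The Parikh image of `L(A_ex3)` (w.r.t. the letter
ordering `(a, b, c)`) equals `{(2n+1, 2n+1, 2n+1) : n ≥ 0}`. -/
theorem Aex3_parikh_image :
    { p : ℕ × ℕ × ℕ | ∃ w ∈ Aex3.lang,
        p = (w.count Γ3.a, w.count Γ3.b, w.count Γ3.c) } =
    { p : ℕ × ℕ × ℕ | ∃ n : ℕ, p = (2 * n + 1, 2 * n + 1, 2 * n + 1) } := by
  ext p
  constructor
  · rintro ⟨w, hw, rfl⟩
    obtain ⟨n, ha, hb, hc⟩ := Aex3.exists_count_eq_of_mem_lang hw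
    exact ⟨n, by rw [ha, hb, hc]⟩
  · rintro ⟨n, rfl⟩
    obtain ⟨ha, hb, hc⟩ := Aex3.count_word n
    exact ⟨Aex3.word n, Aex3.word_mem_lang n, by rw [ha, hb, hc]⟩
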